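/- For every ordinary Dyck sequence D with max(D) = m, the output φ₁(D) = (E,F,G) is a Type 1 Dyck triple of height m: E is a reverse [1,m] Dyck sequence, F is a Dyck m-skeleton, and G is an affine [0,m−1] Dyck sequence. -/

import Mathlib

/-- A finite integer sequence is an *affine Dyck sequence* if each entry is at
most the previous entry plus 1. -/
def AffineDyck (x : List ℤ) : Prop := List.Chain' (fun a b => b ≤ a + 1) x

/-- A finite integer sequence is a *reverse Dyck sequence* if each entry is at
least the previous entry minus 1. -/
def ReverseDyck (x : List ℤ) : Prop := List.Chain' (fun a b => a - 1 ≤ b) x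

/-- An *ordinary Dyck sequence* is a nonempty affine Dyck sequence starting at
`0` with all entries nonnegative. -/
def OrdDyck (x : List ℤ) : Prop :=
  x ≠ [] ∧ AffineDyck x ∧ x.getD 0 0 = 0 ∧ ∀ a ∈ x, 0 ≤ a

/-- An index `j` of `C` is *eligible* if there is exactly one index `i < j`
with `C i = C j − 1`, and either `j` is the final index or the next entry is
at most `C j`. -/
def Eligible (C : List ℤ) (j : ℕ) : Prop :=
  j < C.length ∧
  ((Finset.range j).filter (fun i => C.getD i 0 = C.getD j 0 - 1)).card = 1 ∧
  (j + 1 = C.length ∨ C.getD (j + 1) 0 ≤ C.getD j 0)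

instance (C : List ℤ) (j : ℕ) : Decidable (Eligible C j) := by
  unfold Eligible; infer_instance

/-- A *Dyck `m`-skeleton*: an ordinary Dyck sequence with maximum `m`, whose
last entry equals `m`, having no eligible index other than possibly the final
one. -/
def DyckSkeleton (m : ℤ) (F : List ℤ) : Prop :=
  OrdDyck F ∧ (∀ a ∈ F, a ≤ m) ∧ F.getLast? = some m ∧
  ∀ j, Eligible F j → j + 1 = F.length

/-- The leftmost eligible index of `C` that is not the final index. -/
def eligNF? (C : List ℤ) : Option ℕ :=
  (List.range C.length).find? (fun j => decide (Eligible C j ∧ j + 1 ≠ C.length))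

/-- The extraction loop: while the current sequence has a nonfinal eligible
index, remove the entry at the leftmost such index and append the removed
value to the output `E`. -/
def extractAux : ℕ → List ℤ → List ℤ → List ℤ × List ℤ
  | 0, E, C => (E, C)
  | fuel + 1, E, C =>
    match eligNF? C with
    | none => (E, C)
    | some j => extractAux fuel (E ++ [C.getD j 0]) (C.eraseIdx j)

/-- The map `φ₁`: split `D` after its last maximum into `C` and `G`, fully
extract nonfinal extractable entries of `C` into `E`, and return the
resulting triple `(E, F, G)`. -/
def phi1 (D : List ℤ) : List ℤ × List ℤ × List ℤ :=
  let m := D.foldr max 0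
  let k := D.length - 1 - D.reverse.findIdx (fun a => decide (a = m))
  let EF := extractAux (k + 1) [] (D.take (k + 1))
  (EF.1, EF.2, D.drop (k + 1))

/-!
The extraction loop keeps the current sequence `C` an ordinary Dyck sequence bounded by `m` and
ending in `m`. The key fact is that the leftmost nonfinal eligible index `j` of such a `C` is
immediately preceded by its unique predecessor of value `C j - 1`: otherwise the first
non-ascent after that predecessor would be an earlier eligible index. Hence deleting `C j` keeps
`C` affine, and comparing the leftmost eligible indices before and after the deletion shows that
each extracted value is at least the previous one minus one, so `E` is reverse Dyck. The loop
ends with no nonfinal eligible index, i.e. with a skeleton, and `G` lies after the last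
occurrence of `m`, so its entries are below `m`.
-/

namespace List

theorem foldr_max_le {α : Type*} [LinearOrder α] {l : List α} {b m : α} (hb : b ≤ m)
    (h : ∀ a ∈ l, a ≤ m) : l.foldr max b ≤ m := by
  induction l with
  | nil => exact hb
  | cons a l ih =>
    rw [forall_mem_cons] at h
    exact max_le h.1 (ih h.2)

theorem getLast?_eraseIdx_of_succ_lt {α : Type*} {l : List α} {i : ℕ} (h : i + 1 < l.length) :
    (l.eraseIdx i).getLast? = l.getLast? := by
  rw [getLast?_eq_getElem?, getLast?_eq_getElem?, length_eraseIdx_of_lt (by omega),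
    getElem?_eraseIdx_of_ge (by omega)]
  congr 1
  omega

theorem getLast?_take_length_sub_findIdx_reverse {α : Type*} {l : List α} {p : α → Bool}
    (h : ∃ a ∈ l, p a) :
    ∃ a, (l.take (l.length - l.reverse.findIdx p)).getLast? = some a ∧ p a := by
  have h' : ∃ a ∈ l.reverse, p a := by simpa using h
  refine ⟨_, ?_, findIdx_getElem (w := findIdx_lt_length_of_exists h')⟩
  rw [getLast?_eq_head?_reverse, reverse_take, head?_drop,
    Nat.sub_sub_self (l.length_reverse ▸ findIdx_le_length)]
  exact findIdx_getElem?_eq_getElem_of_exists h'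

theorem eq_false_of_mem_drop_length_sub_findIdx_reverse {α : Type*} {l : List α}
    {p : α → Bool} {a : α} (ha : a ∈ l.drop (l.length - l.reverse.findIdx p)) :
    p a = false := by
  rw [← mem_reverse, reverse_drop,
    Nat.sub_sub_self (l.length_reverse ▸ findIdx_le_length)] at ha
  exact false_of_mem_take_findIdx ha

theorem getD_eraseIdx_of_lt {α : Type*} (l : List α) (d : α) {i j : ℕ} (h : i < j) :
    (l.eraseIdx j).getD i d = l.getD i d := by
  rw [getD_eq_getElem?_getD, getD_eq_getElem?_getD, getElem?_eraseIdx, if_pos h]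

theorem getD_eraseIdx_of_le {α : Type*} (l : List α) (d : α) {i j : ℕ} (h : j ≤ i) :
    (l.eraseIdx j).getD i d = l.getD (i + 1) d := by
  rw [getD_eq_getElem?_getD, getD_eq_getElem?_getD, getElem?_eraseIdx, if_neg (by omega)]

theorem getD_mem_of_lt {α : Type*} {l : List α} {i : ℕ} (d : α) (h : i < l.length) :
    l.getD i d ∈ l := by
  rw [getD_eq_getElem _ _ h]
  exact getElem_mem h

end List

theorem affineDyck_iff_getD {C : List ℤ} :
    AffineDyck C ↔ ∀ i, i + 1 < C.length → C.getD (i + 1) 0 ≤ C.getD i 0 + 1 := by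
  rw [AffineDyck, List.Chain', List.isChain_iff_getElem]
  refine forall_congr' fun i => ⟨fun h hi => ?_, fun h hi => ?_⟩
  · rw [List.getD_eq_getElem _ _ hi, List.getD_eq_getElem _ _ (by omega)]; exact h hi
  · have := h hi
    rwa [List.getD_eq_getElem _ _ hi, List.getD_eq_getElem _ _ (by omega)] at this

namespace AffineDyck

variable {C : List ℤ}

theorem getD_succ_le (h : AffineDyck C) {i : ℕ} (hi : i + 1 < C.length) :
    C.getD (i + 1) 0 ≤ C.getD i 0 + 1 :=
  affineDyck_iff_getD.mp h i hi

theorem exists_getD_eq (h : AffineDyck C) {a b : ℕ} {w : ℤ} (hab : a ≤ b)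
    (hb : b < C.length) (ha : C.getD a 0 ≤ w) (hw : w ≤ C.getD b 0) :
    ∃ i, a ≤ i ∧ i ≤ b ∧ C.getD i 0 = w := by
  induction b, hab using Nat.le_induction with
  | base => exact ⟨a, le_rfl, le_rfl, le_antisymm ha hw⟩
  | succ b hab ih =>
    rcases hw.eq_or_lt with hw | hw
    · exact ⟨b + 1, by omega, le_rfl, hw.symm⟩
    · obtain ⟨i, hai, hib, hi⟩ := ih (by omega) (by linarith [h.getD_succ_le hb])
      exact ⟨i, hai, by omega, hi⟩

end AffineDyck

theorem Eligible.exists_unique_pred {C : List ℤ} {j : ℕ} (hj : Eligible C j) :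
    ∃ i₀ < j, C.getD i₀ 0 = C.getD j 0 - 1 ∧
      ∀ i < j, C.getD i 0 = C.getD j 0 - 1 → i = i₀ := by
  obtain ⟨i₀, hi₀⟩ := Finset.card_eq_one.mp hj.2.1
  have hmem (i : ℕ) : i < j ∧ C.getD i 0 = C.getD j 0 - 1 ↔ i = i₀ := by
    simpa using Finset.ext_iff.mp hi₀ i
  obtain ⟨hi₀j, hv₀⟩ := (hmem i₀).mpr rfl
  exact ⟨i₀, hi₀j, hv₀, fun i hi hv => (hmem i).mp ⟨hi, hv⟩⟩

theorem Eligible.one_le_getD {C : List ℤ} {j : ℕ} (hC : ∀ a ∈ C, 0 ≤ a)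
    (hj : Eligible C j) : 1 ≤ C.getD j 0 := by
  obtain ⟨i₀, hi₀, hv, -⟩ := hj.exists_unique_pred
  linarith [hC _ (List.getD_mem_of_lt 0 (hi₀.trans hj.1))]

theorem eligNF?_eq_some_iff {C : List ℤ} {j : ℕ} :
    eligNF? C = some j ↔ (Eligible C j ∧ j + 1 ≠ C.length) ∧
      ∀ i < j, ¬(Eligible C i ∧ i + 1 ≠ C.length) := by
  rw [eligNF?, List.find?_range_eq_some]
  simp only [decide_eq_true_eq, List.mem_range, Bool.not_eq_true', decide_eq_false_iff_not]
  exact ⟨fun ⟨h, _, hmin⟩ => ⟨h, hmin⟩, fun ⟨h, hmin⟩ => ⟨h, h.1.1, hmin⟩⟩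

theorem eligNF?_eq_none_iff {C : List ℤ} :
    eligNF? C = none ↔ ∀ j, Eligible C j → j + 1 = C.length := by
  rw [eligNF?, List.find?_range_eq_none]
  simp only [Bool.not_eq_true', decide_eq_false_iff_not, not_and, not_not]
  exact ⟨fun h j hj => h j hj.1 hj, fun h j _ hj => h j hj⟩

theorem eligible_of_ascent {C : List ℤ} {i₀ r : ℕ} (hr : i₀ < r) (hrlen : r + 1 < C.length)
    (hbefore : ∀ i < i₀, C.getD i 0 < C.getD i₀ 0)
    (hasc : ∀ s, i₀ ≤ s → s < r → C.getD (s + 1) 0 = C.getD s 0 + 1)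
    (hdesc : C.getD (r + 1) 0 ≤ C.getD r 0) : Eligible C r := by
  have hstair (t : ℕ) (ht : i₀ + t ≤ r) : C.getD (i₀ + t) 0 = C.getD i₀ 0 + t := by
    induction t with
    | zero => simp
    | succ t ih =>
      rw [← add_assoc, hasc _ (by omega) (by omega), ih (by omega)]
      push_cast; ring
  have hpred (i : ℕ) (hi : i < r) : C.getD i 0 = C.getD r 0 - 1 ↔ i = r - 1 := by
    have hr' := hstair (r - i₀) (by omega)
    rw [Nat.add_sub_cancel' hr.le] at hr'
    rcases lt_or_ge i i₀ with hi₀ | hi₀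
    · have := hbefore i hi₀
      omega
    · have := hstair (i - i₀) (by omega)
      rw [Nat.add_sub_cancel' hi₀] at this
      omega
  refine ⟨by omega, Finset.card_eq_one.mpr ⟨r - 1, ?_⟩, Or.inr hdesc⟩
  ext i
  simp only [Finset.mem_filter, Finset.mem_range, Finset.mem_singleton]
  exact ⟨fun ⟨hi, hv⟩ => (hpred i hi).mp hv,
    by rintro rfl; exact ⟨by omega, (hpred _ (by omega)).mpr rfl⟩⟩

theorem OrdDyck.getD_pred_of_eligNF? {C : List ℤ} (hC : OrdDyck C) {j : ℕ}
    (hj : eligNF? C = some j) : 0 < j ∧ C.getD (j - 1) 0 = C.getD j 0 - 1 := by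
  obtain ⟨⟨hel, -⟩, hmin⟩ := eligNF?_eq_some_iff.mp hj
  obtain ⟨-, haff, hhead, hnn⟩ := hC
  obtain ⟨i₀, hi₀, hv₀, huniq⟩ := hel.exists_unique_pred
  have hv := hel.one_le_getD hnn
  have hjlen := hel.1
  suffices i₀ = j - 1 by subst this; exact ⟨by omega, hv₀⟩
  by_contra hne
  have hbefore : ∀ i < i₀, C.getD i 0 < C.getD i₀ 0 := by
    intro i hi
    by_contra! hle
    obtain ⟨i', -, hi', hv'⟩ := haff.exists_getD_eq (Nat.zero_le i) (by omega)
      (by rw [hhead]; omega) hle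
    exact absurd (huniq i' (by omega) (hv'.trans hv₀)) (by omega)
  have hbetween : ∀ s, i₀ < s → s < j → C.getD j 0 ≤ C.getD s 0 := by
    intro s hs hsj
    by_contra! hlt
    obtain ⟨i', hsi', hi'j, hv'⟩ := haff.exists_getD_eq hsj.le hjlen
      (w := C.getD j 0 - 1) (by omega) (by omega)
    have : i' ≠ j := by rintro rfl; omega
    exact absurd (huniq i' (by omega) hv') (by omega)
  -- the first non-ascent after `i₀` comes before `j` and would be an earlier eligible index
  have hlast : C.getD (i₀ + (j - 1 - i₀) + 1) 0 ≤ C.getD (i₀ + (j - 1 - i₀)) 0 := by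
    rw [show i₀ + (j - 1 - i₀) + 1 = j by omega]
    exact hbetween _ (by omega) (by omega)
  have hdesc : ∃ t, C.getD (i₀ + t + 1) 0 ≤ C.getD (i₀ + t) 0 := ⟨_, hlast⟩
  classical
  have htj : Nat.find hdesc ≤ j - 1 - i₀ := Nat.find_min' hdesc hlast
  have ht0 : Nat.find hdesc ≠ 0 := by
    intro h0
    have := Nat.find_spec hdesc
    rw [h0, add_zero] at this
    have := hbetween (i₀ + 1) (by omega) (by omega)
    omega
  have hasc :
      ∀ s, i₀ ≤ s → s < i₀ + Nat.find hdesc → C.getD (s + 1) 0 = C.getD s 0 + 1 := by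
    intro s hs hsr
    have := Nat.find_min hdesc (m := s - i₀) (by omega)
    rw [Nat.add_sub_cancel' hs] at this
    have := haff.getD_succ_le (i := s) (by omega)
    omega
  have helig : Eligible C (i₀ + Nat.find hdesc) :=
    eligible_of_ascent (by omega) (by omega) hbefore hasc (Nat.find_spec hdesc)
  exact hmin _ (by omega) ⟨helig, by omega⟩

theorem AffineDyck.eraseIdx {C : List ℤ} (h : AffineDyck C) {j : ℕ} (hj : 0 < j)
    (hle : C.getD (j + 1) 0 ≤ C.getD (j - 1) 0 + 1) : AffineDyck (C.eraseIdx j) := by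
  rw [affineDyck_iff_getD]
  intro i hi
  have hlen : i + 1 < C.length ∧ (j ≤ i + 1 → i + 2 < C.length) := by
    rw [List.length_eraseIdx] at hi
    split_ifs at hi <;> omega
  rcases lt_trichotomy (i + 1) j with hij | rfl | hij
  · rw [C.getD_eraseIdx_of_lt 0 hij, C.getD_eraseIdx_of_lt 0 (by omega)]
    exact h.getD_succ_le (by omega)
  · rw [C.getD_eraseIdx_of_le 0 le_rfl, C.getD_eraseIdx_of_lt 0 (by omega)]
    exact hle
  · rw [C.getD_eraseIdx_of_le 0 hij.le, C.getD_eraseIdx_of_le 0 (by omega)]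
    exact h.getD_succ_le (by omega)

theorem OrdDyck.eraseIdx_of_eligNF? {C : List ℤ} (hC : OrdDyck C) {j : ℕ}
    (hj : eligNF? C = some j) : OrdDyck (C.eraseIdx j) := by
  obtain ⟨⟨hel, hnf⟩, -⟩ := eligNF?_eq_some_iff.mp hj
  obtain ⟨hpos, hpred⟩ := hC.getD_pred_of_eligNF? hj
  have hnext : C.getD (j + 1) 0 ≤ C.getD j 0 := hel.2.2.resolve_left hnf
  have hjlen := hel.1
  refine ⟨?_, hC.2.1.eraseIdx hpos (by omega), ?_, fun a ha => hC.2.2.2 a ?_⟩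
  · apply List.ne_nil_of_length_pos
    rw [List.length_eraseIdx_of_lt hjlen]
    omega
  · rw [C.getD_eraseIdx_of_lt 0 hpos]
    exact hC.2.2.1
  · exact (List.eraseIdx_sublist _ _).subset ha

theorem eligible_of_eligible_eraseIdx {C : List ℤ} {q j : ℕ} (hqj : q + 1 < j)
    (hj : j < C.length) (h : Eligible (C.eraseIdx j) q) : Eligible C q := by
  obtain ⟨-, hcard, hnext⟩ := h
  have hlen := List.length_eraseIdx_of_lt hj
  refine ⟨by omega, ?_, Or.inr ?_⟩
  · rwa [Finset.filter_congr fun i hi => by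
      rw [C.getD_eraseIdx_of_lt 0 (by simp at hi; omega),
        C.getD_eraseIdx_of_lt 0 (by omega)]] at hcard
  · rw [C.getD_eraseIdx_of_lt 0 hqj, C.getD_eraseIdx_of_lt 0 (by omega)] at hnext
    exact hnext.resolve_left (by omega)

theorem OrdDyck.sub_one_le_getD_eligNF?_eraseIdx {C : List ℤ} (hC : OrdDyck C) {j q : ℕ}
    (hj : eligNF? C = some j) (hq : eligNF? (C.eraseIdx j) = some q) :
    C.getD j 0 - 1 ≤ (C.eraseIdx j).getD q 0 := by
  obtain ⟨⟨helj, -⟩, hminj⟩ := eligNF?_eq_some_iff.mp hj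
  obtain ⟨⟨helq, -⟩, -⟩ := eligNF?_eq_some_iff.mp hq
  obtain ⟨hpos, hpred⟩ := hC.getD_pred_of_eligNF? hj
  have hC' := hC.eraseIdx_of_eligNF? hj
  have hjlen := helj.1
  have hlen := List.length_eraseIdx_of_lt hjlen
  set C' := C.eraseIdx j
  have hpred' : C'.getD (j - 1) 0 = C.getD j 0 - 1 := by
    rw [C.getD_eraseIdx_of_lt 0 (by omega), hpred]
  rcases lt_trichotomy (q + 1) j with hlt | heq | hgt
  · exact absurd ⟨eligible_of_eligible_eraseIdx hlt hjlen helq, by omega⟩ (hminj q (by omega))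
  · rw [show q = j - 1 by omega, hpred']
  · by_contra! hlt
    obtain ⟨hqpos, hqpred⟩ := hC'.getD_pred_of_eligNF? hq
    obtain ⟨i₀, -, -, huniq⟩ := helq.exists_unique_pred
    have hv := helq.one_le_getD hC'.2.2.2
    obtain ⟨i, -, hij, hi⟩ := hC'.2.1.exists_getD_eq (Nat.zero_le (j - 1)) (by omega)
      (w := C'.getD q 0 - 1) (by rw [hC'.2.2.1]; omega) (by omega)
    have : i ≠ j - 1 := by rintro rfl; omega
    have := huniq i (by omega) hi
    have := huniq (q - 1) (by omega) hqpred
    omega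

theorem OrdDyck.take {D : List ℤ} (hD : OrdDyck D) {n : ℕ} (hn : 0 < n) :
    OrdDyck (D.take n) := by
  obtain ⟨hne, haff, hhead, hnn⟩ := hD
  refine ⟨by simpa [List.take_eq_nil_iff] using ⟨hn.ne', hne⟩, List.IsChain.take haff n, ?_,
    fun a ha => hnn a (List.take_subset _ _ ha)⟩
  rwa [List.getD_eq_getElem?_getD, List.getElem?_take_of_lt hn, ← List.getD_eq_getElem?_getD]

theorem extractAux_induction (P : List ℤ → List ℤ → Prop)
    (step : ∀ E C j, eligNF? C = some j → P E C → P (E ++ [C.getD j 0]) (C.eraseIdx j)) :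
    ∀ fuel E C, P E C → P (extractAux fuel E C).1 (extractAux fuel E C).2
  | 0, _, _, h => h
  | fuel + 1, E, C, h => by
    unfold extractAux
    split
    · exact h
    · exact extractAux_induction P step fuel _ _ (step E C _ ‹_› h)

theorem eligNF?_extractAux_eq_none :
    ∀ (fuel : ℕ) (E C : List ℤ), C.length ≤ fuel + 1 →
      eligNF? (extractAux fuel E C).2 = none
  | 0, _, C, h => show eligNF? C = none from
    eligNF?_eq_none_iff.mpr fun j hj => by have := hj.1; omega
  | fuel + 1, E, C, h => by
    unfold extractAux
    split
    · assumption
    · rename_i j hj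
      have hjlen := (eligNF?_eq_some_iff.mp hj).1.1.1
      refine eligNF?_extractAux_eq_none fuel _ _ ?_
      rw [List.length_eraseIdx_of_lt hjlen]
      omega

structure ExtractionInvariant (m : ℤ) (E C : List ℤ) : Prop where
  ordDyck : OrdDyck C
  le_of_mem : ∀ a ∈ C, a ≤ m
  getLast?_eq : C.getLast? = some m
  reverseDyck : ReverseDyck E
  mem_Icc : ∀ a ∈ E, 1 ≤ a ∧ a ≤ m
  sub_one_le : ∀ e ∈ E.getLast?, ∀ q ∈ eligNF? C, e - 1 ≤ C.getD q 0

theorem ExtractionInvariant.step {m : ℤ} {E C : List ℤ} {j : ℕ}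
    (h : ExtractionInvariant m E C) (hj : eligNF? C = some j) :
    ExtractionInvariant m (E ++ [C.getD j 0]) (C.eraseIdx j) := by
  obtain ⟨⟨hel, hnf⟩, -⟩ := eligNF?_eq_some_iff.mp hj
  refine ⟨h.ordDyck.eraseIdx_of_eligNF? hj,
    fun a ha => h.le_of_mem a ((List.eraseIdx_sublist _ _).subset ha), ?_, ?_, ?_, ?_⟩
  · rw [List.getLast?_eraseIdx_of_succ_lt (by have := hel.1; omega), h.getLast?_eq]
  · rw [ReverseDyck, List.Chain', List.isChain_append]
    refine ⟨h.reverseDyck, List.isChain_singleton _, fun e he y hy => ?_⟩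
    obtain rfl : y = C.getD j 0 := (Option.mem_some_iff.mp hy).symm
    exact h.sub_one_le e he j hj
  · intro a ha
    rcases List.mem_append.mp ha with ha | ha
    · exact h.mem_Icc a ha
    · obtain rfl := List.mem_singleton.mp ha
      exact ⟨hel.one_le_getD h.ordDyck.2.2.2, h.le_of_mem _ (List.getD_mem_of_lt 0 hel.1)⟩
  · intro e he q hq
    rw [List.getLast?_concat] at he
    obtain rfl : e = C.getD j 0 := (Option.mem_some_iff.mp he).symm
    exact h.ordDyck.sub_one_le_getD_eligNF?_eraseIdx hj hq

theorem phi1_well_defined (D : List ℤ) (m : ℤ) (hD : OrdDyck D)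
    (hmem : m ∈ D) (hmax : ∀ a ∈ D, a ≤ m) :
    ReverseDyck (phi1 D).1 ∧ (∀ a ∈ (phi1 D).1, 1 ≤ a ∧ a ≤ m) ∧
    DyckSkeleton m (phi1 D).2.1 ∧
    AffineDyck (phi1 D).2.2 ∧ (∀ a ∈ (phi1 D).2.2, 0 ≤ a ∧ a ≤ m - 1) := by
  have hm : D.foldr max 0 = m :=
    le_antisymm (List.foldr_max_le (hD.2.2.2 m hmem) hmax) (List.le_max_of_le' 0 hmem le_rfl)
  have hex : ∃ a ∈ D, decide (a = m) = true := ⟨m, hmem, decide_eq_true rfl⟩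
  have hfi : D.reverse.findIdx (fun a => decide (a = m)) < D.length := by
    simpa using List.findIdx_lt_length_of_exists (xs := D.reverse) (by simpa using hex)
  simp only [phi1, hm, show D.length - 1 - D.reverse.findIdx (fun a => decide (a = m)) + 1 =
    D.length - D.reverse.findIdx (fun a => decide (a = m)) by omega]
  obtain ⟨a, hlast, ha⟩ := List.getLast?_take_length_sub_findIdx_reverse hex
  rw [of_decide_eq_true ha] at hlast
  set n := D.length - D.reverse.findIdx (fun a => decide (a = m))
  have hinit : ExtractionInvariant m [] (D.take n) :=
    ⟨hD.take (by omega), fun a ha => hmax a (List.take_subset _ _ ha), hlast, List.isChain_nil,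
      by simp, by simp⟩
  have hF := extractAux_induction (ExtractionInvariant m) (fun _ _ _ hj h => h.step hj) n [] _
    hinit
  have hnone := eligNF?_extractAux_eq_none n [] (D.take n) (by simp)
  refine ⟨hF.reverseDyck, hF.mem_Icc,
    ⟨hF.ordDyck, hF.le_of_mem, hF.getLast?_eq, eligNF?_eq_none_iff.mp hnone⟩,
    List.IsChain.drop hD.2.1 n, fun a ha => ⟨hD.2.2.2 a (List.drop_subset _ _ ha), ?_⟩⟩
  have hne : a ≠ m := of_decide_eq_false
    (List.eq_false_of_mem_drop_length_sub_findIdx_reverse (p := fun b => decide (b = m)) ha)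
  have hle := hmax a (List.drop_subset _ _ ha)
  omega
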